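/- Let A be a finite abelian group of odd order. Then every quadratic form q : A → ℝ/ℤ satisfies o(a)·q(a) = 0 for all a ∈ A, where o(a) is the order of a; equivalently, Quad(A, ℝ/ℤ) = Quad₀(A, ℝ/ℤ) ≅ Hom(S²(A), ℝ/ℤ). -/

import Mathlib

/-!
If `n` is odd and `n • a = 0`, then for a quadratic form `q` the element `n • q a` is killed by
`n`, since `n • n • q a = q (n • a) = 0`, and by `2`, since `2 • n • q a = polz q (n • a) a = 0`;
as `n` and `2` are coprime, `n • q a = 0`. Taking `n = |A|`, halving by `(n + 1) / 2` is then
possible on `A` and on all quadratic forms, so `q a = ((n + 1) / 2) • polz q a a` is recovered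
from its polarization, a symmetric bilinear form, i.e. a hom on `S²(A)`; conversely every hom
`f` on `S²(A)` gives the quadratic form `a ↦ f (a a)`.
-/

variable {A B : Type*} [AddCommGroup A] [AddCommGroup B]

/-- The polarization of a map between abelian groups. -/
def polz (γ : A → B) (x y : A) : B := γ (x + y) - γ x - γ y

/-- A quadratic form between abelian groups: even, with bilinear polarization. -/
def IsQuadratic (γ : A → B) : Prop :=
  (∀ a, γ a = γ (-a)) ∧
  (∀ x x' y, polz γ (x + x') y = polz γ x y + polz γ x' y) ∧
  (∀ x y y', polz γ x (y + y') = polz γ x y + polz γ x y')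

lemma polz_add_fun (f g : A → B) (x y : A) :
    polz (f + g) x y = polz f x y + polz g x y := by
  simp only [polz, Pi.add_apply]; abel

lemma polz_neg_fun (f : A → B) (x y : A) :
    polz (-f) x y = - polz f x y := by
  simp only [polz, Pi.neg_apply]; abel

/-- The group of `ℝ/ℤ`-valued quadratic forms on `A`. -/
noncomputable def QuadGroup (A : Type*) [AddCommGroup A] : AddSubgroup (A → AddCircle (1 : ℝ)) where
  carrier := {γ | IsQuadratic γ}
  zero_mem' := ⟨fun _ => rfl, fun _ _ _ => by simp [polz], fun _ _ _ => by simp [polz]⟩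
  add_mem' := by
    rintro f g ⟨hf1, hf2, hf3⟩ ⟨hg1, hg2, hg3⟩
    refine ⟨fun a => by simp only [Pi.add_apply, hf1 a, hg1 a], fun x x' y => ?_,
      fun x y y' => ?_⟩
    · rw [polz_add_fun, polz_add_fun, polz_add_fun, hf2, hg2]; abel
    · rw [polz_add_fun, polz_add_fun, polz_add_fun, hf3, hg3]; abel
  neg_mem' := by
    rintro f ⟨hf1, hf2, hf3⟩
    refine ⟨fun a => by simp only [Pi.neg_apply, hf1 a], fun x x' y => ?_, fun x y y' => ?_⟩
    · rw [polz_neg_fun, polz_neg_fun, polz_neg_fun, hf2]; abel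
    · rw [polz_neg_fun, polz_neg_fun, polz_neg_fun, hf3]; abel

open TensorProduct in
/-- The second symmetric power `S²(A) = (A ⊗ A)/⟨a⊗b - b⊗a⟩` of `A` as a ℤ-module. -/
abbrev symPower2 (A : Type*) [AddCommGroup A] :=
  (TensorProduct ℤ A A) ⧸
    (Submodule.span ℤ {x : TensorProduct ℤ A A | ∃ a b : A, x = a ⊗ₜ[ℤ] b - b ⊗ₜ[ℤ] a})

lemma polz_comm (q : A → B) (x y : A) : polz q x y = polz q y x := by
  simp only [polz, add_comm x y]; abel

lemma mem_quadGroup {q : A → AddCircle (1 : ℝ)} : q ∈ QuadGroup A ↔ IsQuadratic q := Iff.rfl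

namespace IsQuadratic

variable {q : A → B} (hq : IsQuadratic q)
include hq

def polzBilin : A →ₗ[ℤ] A →ₗ[ℤ] B :=
  (AddMonoidHom.mk' (fun x => (AddMonoidHom.mk' (polz q x) (hq.2.2 x)).toIntLinearMap)
    fun x x' => by ext y; exact hq.2.1 x x' y).toIntLinearMap

@[simp]
lemma polzBilin_apply (x y : A) : hq.polzBilin x y = polz q x y := rfl

lemma polz_zero_left (b : A) : polz q 0 b = 0 :=
  hq.polzBilin.map_zero₂ b

lemma map_zero : q 0 = 0 := by
  simpa [polz] using hq.polz_zero_left 0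

lemma polz_self (a : A) : polz q a a = 2 • q a := by
  have h := (hq.polzBilin a).map_add a (-a)
  have hneg : polz q a (-a) = -(2 • q a) := by
    simp only [polz, add_neg_cancel, hq.map_zero, ← hq.1 a, two_nsmul]; abel
  rwa [add_neg_cancel, _root_.map_zero, polzBilin_apply, polzBilin_apply, hneg, eq_comm,
    add_neg_eq_zero] at h

lemma polz_nsmul_left (n : ℕ) (a b : A) : polz q (n • a) b = n • polz q a b := by
  simp only [← hq.polzBilin_apply, _root_.map_nsmul, LinearMap.smul_apply]

lemma map_nsmul (n : ℕ) (a : A) : q (n • a) = (n * n) • q a := by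
  induction n with
  | zero => simpa using hq.map_zero
  | succ n ih =>
    have hpolz : q ((n + 1) • a) = q (n • a) + q a + polz q (n • a) a := by
      rw [succ_nsmul, polz]; abel
    rw [hpolz, ih, hq.polz_nsmul_left, hq.polz_self, ← mul_nsmul, ← succ_nsmul, ← add_nsmul]
    ring_nf

lemma nsmul_eq_zero_of_odd {n : ℕ} (hn : Odd n) {a : A} (ha : n • a = 0) : n • q a = 0 := by
  refine (nsmul_eq_zero_iff_of_coprime hn.coprime_two_right).mp ⟨?_, ?_⟩
  · rw [← mul_nsmul', ← hq.map_nsmul, ha, hq.map_zero]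
  · rw [smul_comm, ← hq.polz_self, ← hq.polz_nsmul_left, ha, hq.polz_zero_left]

end IsQuadratic

namespace symPower2

noncomputable def mk : A →ₗ[ℤ] A →ₗ[ℤ] symPower2 A :=
  (TensorProduct.mk ℤ A A).compr₂ (Submodule.mkQ _)

lemma mk_comm (x y : A) : (mk x y : symPower2 A) = mk y x :=
  (Submodule.Quotient.eq _).mpr (Submodule.subset_span ⟨x, y, rfl⟩)

variable {C : Type*} [AddCommGroup C]

@[ext]
lemma hom_ext {f g : symPower2 A →+ C} (h : ∀ x y : A, f (mk x y) = g (mk x y)) : f = g := by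
  ext z
  obtain ⟨t, rfl⟩ := Submodule.Quotient.mk_surjective _ z
  induction t using TensorProduct.induction_on with
  | zero => simp only [Submodule.Quotient.mk_zero, map_zero]
  | tmul x y => exact h x y
  | add s t hs ht => simp only [Submodule.Quotient.mk_add, map_add, hs, ht]

noncomputable def lift (φ : A →ₗ[ℤ] A →ₗ[ℤ] C) (hφ : ∀ x y, φ x y = φ y x) : symPower2 A →+ C :=
  (Submodule.liftQ _ (TensorProduct.lift φ) (Submodule.span_le.mpr (by
    rintro _ ⟨a, b, rfl⟩
    simp [hφ a b]))).toAddMonoidHom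

@[simp]
lemma lift_mk (φ : A →ₗ[ℤ] A →ₗ[ℤ] C) (hφ : ∀ x y, φ x y = φ y x) (x y : A) :
    lift φ hφ (mk x y) = φ x y :=
  TensorProduct.lift.tmul x y

noncomputable def toQuad (f : symPower2 A →+ B) (a : A) : B := f (mk a a)

lemma polz_toQuad (f : symPower2 A →+ B) (x y : A) :
    polz (toQuad f) x y = f (mk x y) + f (mk y x) := by
  simp only [polz, toQuad, map_add, LinearMap.add_apply]
  abel

lemma isQuadratic_toQuad (f : symPower2 A →+ B) : IsQuadratic (toQuad f) := by
  refine ⟨fun a => by simp [toQuad], fun x x' y => ?_, fun x y y' => ?_⟩ <;>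
  · simp only [polz_toQuad, map_add, LinearMap.add_apply]
    abel

end symPower2

namespace IsQuadratic

variable {q : A → B} (hq : IsQuadratic q)

noncomputable def polzHom : symPower2 A →+ B :=
  symPower2.lift hq.polzBilin (polz_comm q)

@[simp]
lemma polzHom_mk (x y : A) : hq.polzHom (symPower2.mk x y) = polz q x y :=
  symPower2.lift_mk _ _ x y

end IsQuadratic

lemma Odd.add_one_div_two_nsmul_two_nsmul {n : ℕ} (hn : Odd n) {x : B} (hx : n • x = 0) :
    ((n + 1) / 2) • 2 • x = x := by
  rw [← mul_nsmul, Nat.two_mul_div_two_of_even hn.add_one, succ_nsmul, hx, zero_add]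

noncomputable def quadGroupEquivOfOdd {n : ℕ} (hn : Odd n) (hA : ∀ a : A, n • a = 0) :
    QuadGroup A ≃+ (symPower2 A →+ AddCircle (1 : ℝ)) :=
  AddEquiv.symm
    { toFun := fun f => ⟨symPower2.toQuad f, symPower2.isQuadratic_toQuad f⟩
      invFun := fun q => ((n + 1) / 2) • (mem_quadGroup.mp q.2).polzHom
      left_inv := fun f => by
        ext x y
        have hnxy : n • f (symPower2.mk x y) = 0 := by
          rw [← map_nsmul, ← LinearMap.smul_apply, ← map_nsmul, hA, LinearMap.map_zero₂, map_zero]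
        rw [AddMonoidHom.smul_apply, IsQuadratic.polzHom_mk, symPower2.polz_toQuad,
          symPower2.mk_comm y x, ← two_nsmul]
        exact hn.add_one_div_two_nsmul_two_nsmul hnxy
      right_inv := by
        rintro ⟨q, hq : IsQuadratic q⟩
        ext a
        change ((n + 1) / 2) • hq.polzHom (symPower2.mk a a) = q a
        rw [IsQuadratic.polzHom_mk, hq.polz_self]
        exact hn.add_one_div_two_nsmul_two_nsmul (hq.nsmul_eq_zero_of_odd hn (hA a))
      map_add' := fun _ _ => rfl }

theorem odd_order_quad_eq_quad0_general (A : Type*) [AddCommGroup A]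
    (hodd : Odd (Nat.card A)) :
    (∀ q : A → AddCircle (1 : ℝ), IsQuadratic q → ∀ a : A, addOrderOf a • q a = 0) ∧
    Nonempty (QuadGroup A ≃+ (symPower2 A →+ AddCircle (1 : ℝ))) :=
  ⟨fun _ hq a => hq.nsmul_eq_zero_of_odd (hodd.of_dvd_nat (addOrderOf_dvd_natCard a))
      (addOrderOf_nsmul_eq_zero a),
    ⟨quadGroupEquivOfOdd hodd fun _ => card_nsmul_eq_zero'⟩⟩

/-- For a finite abelian group of odd order, every quadratic form `q` satisfies
`o(a)·q(a) = 0`, and `Quad(A, ℝ/ℤ) = Quad₀(A, ℝ/ℤ) ≅ Hom(S²(A), ℝ/ℤ)`. -/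
theorem odd_order_quad_eq_quad0 (A : Type*) [AddCommGroup A] [Finite A]
    (hodd : Odd (Nat.card A)) :
    (∀ q : A → AddCircle (1 : ℝ), IsQuadratic q → ∀ a : A, addOrderOf a • q a = 0) ∧
    Nonempty (QuadGroup A ≃+ (symPower2 A →+ AddCircle (1 : ℝ))) :=
  odd_order_quad_eq_quad0_general A hodd
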